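/- arXiv:math/0009140 — 4 statements merged into one kernel-verified Lean document; each statement's English description precedes it below -/
import Mathlib

section
/- Let (M,φ) be a compact, connected, oriented Riemannian manifold and (N,ψ) a Riemannian manifold, and let T be a tensor on M×N with components T^i_α(a,x). If the smooth map f: M → N is a solution of the system (E): ∂f^i/∂a^α = T^i_α(a,f(a)) with T nowhere zero along f, then f is a global minimum point of the functional L_T on its domain: for every smooth map g: M → N with ⟨δg, T(·,g(·))⟩ nowhere zero, L_T(f) ≤ L_T(g). -/
/- Coordinate presentation: `φinv a` is the inverse metric `φ^{αβ}` of `M` at `a`,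
`ψ x` the metric `ψ_{ij}` of `N` at `x`, `μ` is the Riemannian volume measure `√φ da`
of the compact oriented `(M,φ)` (a finite measure of full support), `T a x` are the
components `T^i_α(a,x)` of the tensor `T` on `M × N`, and `Df a` are the components
`f^i_α(a) = ∂f^i/∂a^α` of the differential `δf` of the smooth map `f : M → N`.
The pointwise scalar product is `⟨T,S⟩ = φ^{αβ} ψ_{ij} T^i_α S^j_β`. -/

open scoped Manifold
open MeasureTheory

/-- The pointwise scalar product `⟨T,S⟩ = φ^{αβ} ψ_{ij} T^i_α S^j_β`. -/
noncomputable def glProd {m n : ℕ} (φinv : Matrix (Fin m) (Fin m) ℝ)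
    (ψ : Matrix (Fin n) (Fin n) ℝ) (T S : Fin n → Fin m → ℝ) : ℝ :=
  ∑ α : Fin m, ∑ β : Fin m, ∑ i : Fin n, ∑ j : Fin n,
    φinv α β * ψ i j * T i α * S j β

/-! The scalar product `⟨T,S⟩` is the bilinear form of the Kronecker product `ψ ⊗ φ⁻¹` of two
positive definite matrices, so it is positive definite and satisfies Cauchy–Schwarz. Hence the
integrand `‖δg‖²‖T‖²/⟨δg,T⟩²` of `L_T` is at least `1` at every point, while along a solution
of (E) it is `‖T‖⁴/‖T‖⁴ = 1`. Integrating, `L_T(f) = vol(M)/2 ≤ L_T(g)`. -/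

open scoped Kronecker
open Matrix

section
variable {m n : ℕ} {A : Matrix (Fin m) (Fin m) ℝ} {B : Matrix (Fin n) (Fin n) ℝ}

theorem glProd_eq_dotProduct_kronecker (T S : Fin n → Fin m → ℝ) :
    glProd A B T S = Function.uncurry T ⬝ᵥ (B ⊗ₖ A) *ᵥ Function.uncurry S := by
  simp only [glProd, dotProduct, mulVec, Fintype.sum_prod_type, kronecker_apply,
    Function.uncurry_apply_pair, Finset.mul_sum]
  calc _ = ∑ α, ∑ i, ∑ j, ∑ β, A α β * B i j * T i α * S j β :=
        Finset.sum_congr rfl fun α _ => Finset.sum_comm.trans <|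
          Finset.sum_congr rfl fun i _ => Finset.sum_comm
    _ = _ := Finset.sum_comm.trans <| Finset.sum_congr rfl fun i _ =>
        Finset.sum_congr rfl fun α _ => Finset.sum_congr rfl fun j _ =>
          Finset.sum_congr rfl fun β _ => by ring

theorem glProd_self_nonneg (hA : A.PosSemidef) (hB : B.PosSemidef) (T : Fin n → Fin m → ℝ) :
    0 ≤ glProd A B T T := by
  simpa [glProd_eq_dotProduct_kronecker] using
    (hB.kronecker hA).dotProduct_mulVec_nonneg (Function.uncurry T)

theorem glProd_self_pos (hA : A.PosDef) (hB : B.PosDef) {T : Fin n → Fin m → ℝ}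
    (hT : T ≠ 0) : 0 < glProd A B T T := by
  have hT' : Function.uncurry T ≠ 0 := by
    simpa using ((LinearEquiv.curry ℝ ℝ (Fin n) (Fin m)).symm.map_ne_zero_iff).2 hT
  simpa [glProd_eq_dotProduct_kronecker] using (hB.kronecker hA).dotProduct_mulVec_pos hT'

theorem glProd_comm (hA : A.IsSymm) (hB : B.IsSymm) (T S : Fin n → Fin m → ℝ) :
    glProd A B T S = glProd A B S T := by
  rw [glProd_eq_dotProduct_kronecker, glProd_eq_dotProduct_kronecker, dotProduct_mulVec,
    ← mulVec_transpose, ← kroneckerMap_transpose, hA.eq, hB.eq, dotProduct_comm]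

variable (A B) in
noncomputable def glBilinForm : LinearMap.BilinForm ℝ (Fin n → Fin m → ℝ) :=
  (toLinearMap₂' ℝ (B ⊗ₖ A)).compl₁₂ (LinearEquiv.curry ℝ ℝ (Fin n) (Fin m)).symm.toLinearMap
    (LinearEquiv.curry ℝ ℝ (Fin n) (Fin m)).symm.toLinearMap

theorem glBilinForm_apply (T S : Fin n → Fin m → ℝ) :
    glBilinForm A B T S = glProd A B T S := by
  simp [glBilinForm, toLinearMap₂'_apply', glProd_eq_dotProduct_kronecker]

theorem glProd_sq_le (hA : A.PosSemidef) (hB : B.PosSemidef) (T S : Fin n → Fin m → ℝ) :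
    glProd A B T S ^ 2 ≤ glProd A B T T * glProd A B S S := by
  have hsymm : LinearMap.IsSymm (glBilinForm A B) := ⟨fun T S => by
    rw [RingHom.id_apply, glBilinForm_apply, glBilinForm_apply, glProd_comm
      (isHermitian_iff_isSymm.mp hA.isHermitian) (isHermitian_iff_isSymm.mp hB.isHermitian)]⟩
  simpa only [glBilinForm_apply] using (glBilinForm A B).apply_sq_le_of_symm
    (fun T => by simpa only [glBilinForm_apply] using glProd_self_nonneg hA hB T) hsymm T S

variable (A B) in
noncomputable def cauchySchwarzRatio (D T : Fin n → Fin m → ℝ) : ℝ :=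
  glProd A B D D * glProd A B T T / glProd A B D T ^ 2

theorem one_le_cauchySchwarzRatio (hA : A.PosSemidef) (hB : B.PosSemidef)
    {D T : Fin n → Fin m → ℝ} (h : glProd A B D T ≠ 0) : 1 ≤ cauchySchwarzRatio A B D T := by
  rw [cauchySchwarzRatio, le_div_iff₀ (by positivity), one_mul]
  exact glProd_sq_le hA hB D T

theorem cauchySchwarzRatio_self (hA : A.PosDef) (hB : B.PosDef) {T : Fin n → Fin m → ℝ}
    (hT : T ≠ 0) : cauchySchwarzRatio A B T T = 1 := by
  have hTT := (glProd_self_pos hA hB hT).ne'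
  rw [cauchySchwarzRatio, sq, div_self (mul_ne_zero hTT hTT)]

end

section
variable {X : Type*} [TopologicalSpace X] {m n : ℕ} {A : X → Matrix (Fin m) (Fin m) ℝ}
  {B : X → Matrix (Fin n) (Fin n) ℝ} {T S : X → Fin n → Fin m → ℝ}

theorem continuous_glProd (hA : Continuous A) (hB : Continuous B) (hT : Continuous T)
    (hS : Continuous S) : Continuous fun x => glProd (A x) (B x) (T x) (S x) := by
  unfold glProd
  fun_prop

theorem continuous_cauchySchwarzRatio (hA : Continuous A) (hB : Continuous B)
    (hT : Continuous T) (hS : Continuous S) (h : ∀ x, glProd (A x) (B x) (T x) (S x) ≠ 0) :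
    Continuous fun x => cauchySchwarzRatio (A x) (B x) (T x) (S x) :=
  (((continuous_glProd hA hB hT hT).mul (continuous_glProd hA hB hS hS)).div
    ((continuous_glProd hA hB hT hS).pow 2))
    fun x => pow_ne_zero 2 (h x)

end

theorem solution_is_global_minimum_general {m n : ℕ} {M N : Type*}
    -- (M,φ) a compact, connected, oriented Riemannian manifold
    [TopologicalSpace M] [ChartedSpace (EuclideanSpace ℝ (Fin m)) M]
    [CompactSpace M] [MeasurableSpace M] [BorelSpace M]
    -- (N,ψ) a Riemannian manifold
    [TopologicalSpace N] [ChartedSpace (EuclideanSpace ℝ (Fin n)) N]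
    (φinv : M → Matrix (Fin m) (Fin m) ℝ)
    (hφpos : ∀ a, (φinv a).PosDef)
    (hφsmooth : ∀ α β, ContMDiff (𝓡 m) 𝓘(ℝ) (⊤ : ℕ∞) fun a => φinv a α β)
    (ψ : N → Matrix (Fin n) (Fin n) ℝ)
    (hψpos : ∀ x, (ψ x).PosDef)
    (hψsmooth : ∀ i j, ContMDiff (𝓡 n) 𝓘(ℝ) (⊤ : ℕ∞) fun x => ψ x i j)
    -- the Riemannian volume measure √φ da of the compact oriented (M,φ)
    (μ : Measure M) [IsFiniteMeasure μ]
    -- a tensor T on M × N with components T^i_α(a,x)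
    (T : M → N → Fin n → Fin m → ℝ)
    (hT : ∀ i α, ContMDiff ((𝓡 m).prod (𝓡 n)) 𝓘(ℝ) (⊤ : ℕ∞) fun p : M × N => T p.1 p.2 i α)
    -- a smooth map f : M → N, with the components Df = (f^i_α) of its differential δf
    (f : M → N) (Df : M → Fin n → Fin m → ℝ)
    -- T(a, f(a)) is nowhere zero along f
    (hTnz : ∀ a : M, T a (f a) ≠ 0)
    -- f is a solution of the system (E): ∂f^i/∂a^α = T^i_α(a, f(a)), i.e. δf = T along f
    (hE : ∀ a : M, Df a = T a (f a)) :
    -- for every smooth map g (with differential components Dg) in the domain of L_T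
    ∀ (g : M → N), ContMDiff (𝓡 m) (𝓡 n) (⊤ : ℕ∞) g →
      ∀ (Dg : M → Fin n → Fin m → ℝ),
        (∀ i α, ContMDiff (𝓡 m) 𝓘(ℝ) (⊤ : ℕ∞) fun a => Dg a i α) →
        (∀ a : M, glProd (φinv a) (ψ (g a)) (Dg a) (T a (g a)) ≠ 0) →
        (1 / 2 : ℝ) * ∫ a, (glProd (φinv a) (ψ (f a)) (Df a) (Df a) *
        glProd (φinv a) (ψ (f a)) (T a (f a)) (T a (f a))) /
        (glProd (φinv a) (ψ (f a)) (Df a) (T a (f a))) ^ 2 ∂μ ≤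
          (1 / 2 : ℝ) * ∫ a, (glProd (φinv a) (ψ (g a)) (Dg a) (Dg a) *
        glProd (φinv a) (ψ (g a)) (T a (g a)) (T a (g a))) /
        (glProd (φinv a) (ψ (g a)) (Dg a) (T a (g a))) ^ 2 ∂μ := by
  intro g hg Dg hDg hden
  change (1 / 2 : ℝ) * ∫ a, cauchySchwarzRatio (φinv a) (ψ (f a)) (Df a) (T a (f a)) ∂μ ≤
    (1 / 2 : ℝ) * ∫ a, cauchySchwarzRatio (φinv a) (ψ (g a)) (Dg a) (T a (g a)) ∂μ
  have hf_one a : cauchySchwarzRatio (φinv a) (ψ (f a)) (Df a) (T a (f a)) = 1 := by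
    rw [hE a]
    exact cauchySchwarzRatio_self (hφpos a) (hψpos (f a)) (hTnz a)
  have hg_ge a : 1 ≤ cauchySchwarzRatio (φinv a) (ψ (g a)) (Dg a) (T a (g a)) :=
    one_le_cauchySchwarzRatio (hφpos a).posSemidef (hψpos (g a)).posSemidef (hden a)
  have hφ_cont : Continuous φinv :=
    continuous_matrix fun α β => (hφsmooth α β).continuous
  have hψg_cont : Continuous fun a => ψ (g a) :=
    (continuous_matrix fun i j => (hψsmooth i j).continuous).comp hg.continuous
  have hDg_cont : Continuous Dg :=
    continuous_pi fun i => continuous_pi fun α => (hDg i α).continuous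
  have hTg_cont : Continuous fun a => T a (g a) := continuous_pi fun i => continuous_pi fun α =>
    (hT i α).continuous.comp (continuous_id.prodMk hg.continuous)
  have hg_int : Integrable (fun a => cauchySchwarzRatio (φinv a) (ψ (g a)) (Dg a) (T a (g a))) μ :=
    (continuous_cauchySchwarzRatio hφ_cont hψg_cont hDg_cont
      hTg_cont hden).integrable_of_hasCompactSupport
      (HasCompactSupport.of_compactSpace _)
  simp_rw [hf_one]
  exact mul_le_mul_of_nonneg_left (integral_mono (integrable_const 1) hg_int hg_ge) (by norm_num)

/-- A solution `f` of the system (E): `δf = T(·,f(·))`, with `T` nowhere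
zero along `f`, is a global minimum point of `L_T` on its domain. -/
theorem solution_is_global_minimum {m n : ℕ} {M N : Type*}
    -- (M,φ) a compact, connected, oriented Riemannian manifold
    [TopologicalSpace M] [ChartedSpace (EuclideanSpace ℝ (Fin m)) M]
    [IsManifold (𝓡 m) (⊤ : ℕ∞) M] [CompactSpace M] [ConnectedSpace M]
    [MeasurableSpace M] [BorelSpace M]
    -- (N,ψ) a Riemannian manifold
    [TopologicalSpace N] [ChartedSpace (EuclideanSpace ℝ (Fin n)) N]
    [IsManifold (𝓡 n) (⊤ : ℕ∞) N]
    (φinv : M → Matrix (Fin m) (Fin m) ℝ)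
    (hφpos : ∀ a, (φinv a).PosDef)
    (hφsmooth : ∀ α β, ContMDiff (𝓡 m) 𝓘(ℝ) (⊤ : ℕ∞) fun a => φinv a α β)
    (ψ : N → Matrix (Fin n) (Fin n) ℝ)
    (hψpos : ∀ x, (ψ x).PosDef)
    (hψsmooth : ∀ i j, ContMDiff (𝓡 n) 𝓘(ℝ) (⊤ : ℕ∞) fun x => ψ x i j)
    -- the Riemannian volume measure √φ da of the compact oriented (M,φ)
    (μ : Measure M) [IsFiniteMeasure μ] [μ.IsOpenPosMeasure]
    -- a tensor T on M × N with components T^i_α(a,x)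
    (T : M → N → Fin n → Fin m → ℝ)
    (hT : ∀ i α, ContMDiff ((𝓡 m).prod (𝓡 n)) 𝓘(ℝ) (⊤ : ℕ∞) fun p : M × N => T p.1 p.2 i α)
    -- a smooth map f : M → N, with the components Df = (f^i_α) of its differential δf
    (f : M → N) (hf : ContMDiff (𝓡 m) (𝓡 n) (⊤ : ℕ∞) f)
    (Df : M → Fin n → Fin m → ℝ)
    (hDf : ∀ i α, ContMDiff (𝓡 m) 𝓘(ℝ) (⊤ : ℕ∞) fun a => Df a i α)
    -- T(a, f(a)) is nowhere zero along f
    (hTnz : ∀ a : M, T a (f a) ≠ 0)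
    -- f is a solution of the system (E): ∂f^i/∂a^α = T^i_α(a, f(a)), i.e. δf = T along f
    (hE : ∀ a : M, Df a = T a (f a)) :
    -- for every smooth map g (with differential components Dg) in the domain of L_T
    ∀ (g : M → N), ContMDiff (𝓡 m) (𝓡 n) (⊤ : ℕ∞) g →
      ∀ (Dg : M → Fin n → Fin m → ℝ),
        (∀ i α, ContMDiff (𝓡 m) 𝓘(ℝ) (⊤ : ℕ∞) fun a => Dg a i α) →
        (∀ a : M, glProd (φinv a) (ψ (g a)) (Dg a) (T a (g a)) ≠ 0) →
        (1 / 2 : ℝ) * ∫ a, (glProd (φinv a) (ψ (f a)) (Df a) (Df a) *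
        glProd (φinv a) (ψ (f a)) (T a (f a)) (T a (f a))) /
        (glProd (φinv a) (ψ (f a)) (Df a) (T a (f a))) ^ 2 ∂μ ≤
          (1 / 2 : ℝ) * ∫ a, (glProd (φinv a) (ψ (g a)) (Dg a) (Dg a) *
        glProd (φinv a) (ψ (g a)) (T a (g a)) (T a (g a))) /
        (glProd (φinv a) (ψ (g a)) (Dg a) (T a (g a))) ^ 2 ∂μ :=
  solution_is_global_minimum_general φinv hφpos hφsmooth ψ hψpos hψsmooth μ T hT f Df hTnz hE
end

section
/- Let (M,φ) be a compact, connected, oriented Riemannian manifold and (N,ψ) a Riemannian manifold, and let T be a tensor on M×N with components T^i_α(a,x). If a smooth map f: M → N in the domain of L_T attains the global minimum value, i.e. L_T(f) = (1/2) Vol_φ(M), then there exists a nowhere-vanishing smooth function K ∈ F(M) such that δf = K·T along f, i.e. ∂f^i/∂a^α (a) = K(a) T^i_α(a,f(a)) for all a ∈ M. -/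
/- Coordinate presentation: `φinv a` is the inverse metric `φ^{αβ}` of `M` at `a`,
`ψ x` the metric `ψ_{ij}` of `N` at `x`, `μ` is the Riemannian volume measure `√φ da`
of the compact oriented `(M,φ)` (a finite measure of full support), `T a x` are the
components `T^i_α(a,x)` of the tensor `T` on `M × N`, and `Df a` are the components
`f^i_α(a) = ∂f^i/∂a^α` of the differential `δf` of the smooth map `f : M → N`.
The pointwise scalar product is `⟨T,S⟩ = φ^{αβ} ψ_{ij} T^i_α S^j_β`. -/

open scoped Manifold
open MeasureTheory

/-!
At each point, Cauchy–Schwarz for `⟨·,·⟩`, which is the bilinear form of the positive definite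
Kronecker product `ψ ⊗ φ⁻¹`, says that the integrand of `L_T` is at least `1`. The integrand is
continuous and its integral equals `Vol_φ(M)`, the integral of `1`; since nonempty open sets
have positive measure it is identically `1`. Equality in Cauchy–Schwarz then gives
`δf = K T` with `K = ⟨δf,T⟩ / ‖T‖²`, which is smooth and nowhere zero because `⟨δf,T⟩` is.
-/

open scoped Kronecker

theorem LinearMap.BilinForm.eq_smul_of_apply_mul_apply_eq {K V : Type*} [Field K] [LinearOrder K]
    [IsStrictOrderedRing K] [AddCommGroup V] [Module K V] (B : LinearMap.BilinForm K V)
    (hp : ∀ x, x ≠ 0 → 0 < B x x) {x y : V} (hy : y ≠ 0)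
    (he : B x y * B y x = B x x * B y y) : x = (B y x / B y y) • y := by
  have hw : B y x • y - B y y • x = 0 := by
    by_contra hw
    have hpos := B.apply_smul_sub_smul_sub_eq y x ▸ hp _ hw
    have : B y y * B x x - B y x * B x y = 0 := by linear_combination -he
    simp [this] at hpos
  rw [sub_eq_zero] at hw
  rw [div_eq_inv_mul, mul_smul, hw, smul_smul, inv_mul_cancel₀ (hp y hy).ne', one_smul]

theorem Continuous.eq_of_le_of_integral_eq {X : Type*} [TopologicalSpace X] [MeasurableSpace X]
    [OpensMeasurableSpace X] {μ : Measure X} [μ.IsOpenPosMeasure] {f g : X → ℝ}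
    (hf : Continuous f) (hg : Continuous g) (hfi : Integrable f μ)
    (hgi : Integrable g μ) (hfg : ∀ x, f x ≤ g x)
    (h : ∫ x, f x ∂μ = ∫ x, g x ∂μ) : f = g :=
  (hf.ae_eq_iff_eq μ hg).mp <|
    (integral_eq_iff_of_ae_le hfi hgi (Filter.Eventually.of_forall hfg)).mp h

section glProd

variable {m n : ℕ} (φinv : Matrix (Fin m) (Fin m) ℝ) (ψ : Matrix (Fin n) (Fin n) ℝ)

noncomputable def glForm : LinearMap.BilinForm ℝ (Fin n → Fin m → ℝ) :=
  (Matrix.toBilin' (ψ ⊗ₖ φinv)).compl₁₂ (LinearEquiv.curry ℝ ℝ (Fin n) (Fin m)).symm.toLinearMap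
    (LinearEquiv.curry ℝ ℝ (Fin n) (Fin m)).symm.toLinearMap

theorem glForm_apply (x y : Fin n → Fin m → ℝ) : glForm φinv ψ x y = glProd φinv ψ x y := by
  simp only [glForm, LinearMap.compl₁₂_apply, LinearEquiv.coe_coe, LinearEquiv.coe_curry_symm,
    Matrix.toBilin'_apply, Fintype.sum_prod_type, Matrix.kroneckerMap_apply,
    Function.uncurry_apply_pair, glProd]
  rw [Finset.sum_comm]
  refine Finset.sum_congr rfl fun α _ => ?_
  rw [Finset.sum_congr rfl fun i _ => Finset.sum_comm, Finset.sum_comm]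
  refine Finset.sum_congr rfl fun β _ => Finset.sum_congr rfl fun i _ =>
    Finset.sum_congr rfl fun j _ => ?_
  ring

variable {φinv ψ}

theorem glForm_isSymm (hφ : φinv.IsSymm) (hψ : ψ.IsSymm) :
    LinearMap.IsSymm (glForm φinv ψ) :=
  have hψφ : (ψ ⊗ₖ φinv).IsSymm := by
    rw [Matrix.IsSymm, ← Matrix.kroneckerMap_transpose, hφ.eq, hψ.eq]
  ⟨fun _ _ => (Matrix.isSymm_toBilin'_iff_isSymm.mpr hψφ).eq _ _⟩

theorem glProd_self_pos_s4 (hφ : φinv.PosDef) (hψ : ψ.PosDef) {x : Fin n → Fin m → ℝ}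
    (hx : x ≠ 0) : 0 < glProd φinv ψ x x := by
  have hx' : Function.uncurry x ≠ 0 :=
    (LinearEquiv.curry ℝ ℝ (Fin n) (Fin m)).symm.map_ne_zero_iff.mpr hx
  simpa [← glForm_apply, glForm, Matrix.toBilin'_apply'] using
    (hψ.kronecker hφ).dotProduct_mulVec_pos hx'

theorem glProd_self_nonneg_s4 (hφ : φinv.PosDef) (hψ : ψ.PosDef) (x : Fin n → Fin m → ℝ) :
    0 ≤ glProd φinv ψ x x := by
  rcases eq_or_ne x 0 with rfl | hx
  · simp [glProd]
  · exact (glProd_self_pos_s4 hφ hψ hx).le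

theorem glProd_comm_s4 (hφ : φinv.IsSymm) (hψ : ψ.IsSymm) (x y : Fin n → Fin m → ℝ) :
    glProd φinv ψ x y = glProd φinv ψ y x := by
  simpa only [glForm_apply, RingHom.id_apply] using (glForm_isSymm hφ hψ).eq x y

theorem glProd_sq_le_s4 (hφ : φinv.PosDef) (hψ : ψ.PosDef) (x y : Fin n → Fin m → ℝ) :
    glProd φinv ψ x y ^ 2 ≤ glProd φinv ψ x x * glProd φinv ψ y y := by
  have hsymm := glForm_isSymm (Matrix.isHermitian_iff_isSymm.mp hφ.isHermitian)
    (Matrix.isHermitian_iff_isSymm.mp hψ.isHermitian)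
  simpa only [glForm_apply] using (glForm φinv ψ).apply_sq_le_of_symm
    (fun z => (glForm_apply φinv ψ z z).symm ▸ glProd_self_nonneg_s4 hφ hψ z) hsymm x y

theorem eq_smul_of_glProd_sq_eq (hφ : φinv.PosDef) (hψ : ψ.PosDef)
    {x y : Fin n → Fin m → ℝ} (hy : y ≠ 0)
    (h : glProd φinv ψ x y ^ 2 = glProd φinv ψ x x * glProd φinv ψ y y) :
    x = (glProd φinv ψ x y / glProd φinv ψ y y) • y := by
  have hcomm := glProd_comm_s4 (Matrix.isHermitian_iff_isSymm.mp hφ.isHermitian)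
    (Matrix.isHermitian_iff_isSymm.mp hψ.isHermitian) y x
  have he : glForm φinv ψ x y * glForm φinv ψ y x = glForm φinv ψ x x * glForm φinv ψ y y := by
    simpa only [glForm_apply, hcomm, ← sq] using h
  simpa only [glForm_apply, hcomm] using (glForm φinv ψ).eq_smul_of_apply_mul_apply_eq
    (fun z hz => (glForm_apply φinv ψ z z).symm ▸ glProd_self_pos_s4 hφ hψ hz) hy he

theorem ContMDiff.glProd {E H X : Type*} [NormedAddCommGroup E] [NormedSpace ℝ E]
    [TopologicalSpace H] {I : ModelWithCorners ℝ E H} [TopologicalSpace X] [ChartedSpace H X]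
    {k : WithTop ℕ∞} {φinv : X → Matrix (Fin m) (Fin m) ℝ} {ψ : X → Matrix (Fin n) (Fin n) ℝ}
    {u v : X → Fin n → Fin m → ℝ} (hφ : ∀ α β, ContMDiff I 𝓘(ℝ) k fun a => φinv a α β)
    (hψ : ∀ i j, ContMDiff I 𝓘(ℝ) k fun a => ψ a i j)
    (hu : ∀ i α, ContMDiff I 𝓘(ℝ) k fun a => u a i α)
    (hv : ∀ j β, ContMDiff I 𝓘(ℝ) k fun a => v a j β) :
    ContMDiff I 𝓘(ℝ) k fun a => glProd (φinv a) (ψ a) (u a) (v a) :=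
  contMDiff_finsetSum fun α _ => contMDiff_finsetSum fun β _ =>
    contMDiff_finsetSum fun i _ => contMDiff_finsetSum fun j _ =>
      (((hφ α β).mul (hψ i j)).mul (hu i α)).mul (hv j β)

end glProd

theorem minimum_implies_proportional_general {m n : ℕ} {M N : Type*}
    -- (M,φ) a compact, connected, oriented Riemannian manifold
    [TopologicalSpace M] [ChartedSpace (EuclideanSpace ℝ (Fin m)) M]
    [CompactSpace M] [MeasurableSpace M] [BorelSpace M]
    -- (N,ψ) a Riemannian manifold
    [TopologicalSpace N] [ChartedSpace (EuclideanSpace ℝ (Fin n)) N]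
    (φinv : M → Matrix (Fin m) (Fin m) ℝ)
    (hφpos : ∀ a, (φinv a).PosDef)
    (hφsmooth : ∀ α β, ContMDiff (𝓡 m) 𝓘(ℝ) (⊤ : ℕ∞) fun a => φinv a α β)
    (ψ : N → Matrix (Fin n) (Fin n) ℝ)
    (hψpos : ∀ x, (ψ x).PosDef)
    (hψsmooth : ∀ i j, ContMDiff (𝓡 n) 𝓘(ℝ) (⊤ : ℕ∞) fun x => ψ x i j)
    -- the Riemannian volume measure √φ da of the compact oriented (M,φ)
    (μ : Measure M) [IsFiniteMeasure μ] [μ.IsOpenPosMeasure]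
    -- a tensor T on M × N with components T^i_α(a,x)
    (T : M → N → Fin n → Fin m → ℝ)
    (hT : ∀ i α, ContMDiff ((𝓡 m).prod (𝓡 n)) 𝓘(ℝ) (⊤ : ℕ∞) fun p : M × N => T p.1 p.2 i α)
    -- a smooth map f : M → N, with the components Df = (f^i_α) of its differential δf
    (f : M → N) (hf : ContMDiff (𝓡 m) (𝓡 n) (⊤ : ℕ∞) f)
    (Df : M → Fin n → Fin m → ℝ)
    (hDf : ∀ i α, ContMDiff (𝓡 m) 𝓘(ℝ) (⊤ : ℕ∞) fun a => Df a i α)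
    -- f is in the domain of L_T : ⟨δf, T(·,f(·))⟩ is nowhere zero
    (hne : ∀ a : M, glProd (φinv a) (ψ (f a)) (Df a) (T a (f a)) ≠ 0)
    -- f attains the global minimum value L_T(f) = (1/2) Vol_φ(M)
    (hmin : (1 / 2 : ℝ) * ∫ a, (glProd (φinv a) (ψ (f a)) (Df a) (Df a) *
        glProd (φinv a) (ψ (f a)) (T a (f a)) (T a (f a))) /
        (glProd (φinv a) (ψ (f a)) (Df a) (T a (f a))) ^ 2 ∂μ =
      (1 / 2 : ℝ) * (μ Set.univ).toReal) :
    -- then δf = K·T along f for some nowhere-vanishing smooth K ∈ F(M)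
    ∃ K : M → ℝ, ContMDiff (𝓡 m) 𝓘(ℝ) (⊤ : ℕ∞) K ∧ (∀ a : M, K a ≠ 0) ∧
      ∀ a : M, Df a = K a • T a (f a) := by
  have hψf : ∀ i j, ContMDiff (𝓡 m) 𝓘(ℝ) (⊤ : ℕ∞) fun a => ψ (f a) i j :=
    fun i j => (hψsmooth i j).comp hf
  have hTf : ∀ i α, ContMDiff (𝓡 m) 𝓘(ℝ) (⊤ : ℕ∞) fun a => T a (f a) i α :=
    fun i α => (hT i α).comp (contMDiff_id.prodMk hf)
  have hTne : ∀ a, T a (f a) ≠ 0 := fun a h => hne a (by simp [h, glProd])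
  have hTT : ∀ a, 0 < glProd (φinv a) (ψ (f a)) (T a (f a)) (T a (f a)) :=
    fun a => glProd_self_pos_s4 (hφpos a) (hψpos (f a)) (hTne a)
  set L : M → ℝ := fun a => glProd (φinv a) (ψ (f a)) (Df a) (Df a) *
    glProd (φinv a) (ψ (f a)) (T a (f a)) (T a (f a)) /
    glProd (φinv a) (ψ (f a)) (Df a) (T a (f a)) ^ 2
  have hLcont : Continuous L :=
    ((ContMDiff.glProd hφsmooth hψf hDf hDf).mul (ContMDiff.glProd hφsmooth hψf hTf hTf)).div₀
      ((ContMDiff.glProd hφsmooth hψf hDf hTf).pow 2) (fun a => pow_ne_zero 2 (hne a)) |>.continuous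
  have hL_ge : ∀ a, 1 ≤ L a := fun a =>
    (one_le_div (pow_two_pos_of_ne_zero (hne a))).mpr (glProd_sq_le_s4 (hφpos a) (hψpos (f a)) _ _)
  have hL_eq : (fun _ => 1) = L := continuous_const.eq_of_le_of_integral_eq hLcont
    (integrable_const 1) (hLcont.integrable_of_hasCompactSupport (.of_compactSpace L)) hL_ge
    (by rw [integral_const, smul_eq_mul, mul_one, measureReal_def]; linarith)
  refine ⟨fun a => glProd (φinv a) (ψ (f a)) (Df a) (T a (f a)) /
    glProd (φinv a) (ψ (f a)) (T a (f a)) (T a (f a)), ?_, fun a => div_ne_zero (hne a) (hTT a).ne',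
    fun a => eq_smul_of_glProd_sq_eq (hφpos a) (hψpos (f a)) (hTne a) ?_⟩
  · exact (ContMDiff.glProd hφsmooth hψf hDf hTf).div₀ (ContMDiff.glProd hφsmooth hψf hTf hTf)
      fun a => (hTT a).ne'
  · exact ((div_eq_one_iff_eq (pow_ne_zero 2 (hne a))).mp (congrFun hL_eq a).symm).symm

/-- If a smooth map `f` in the domain of `L_T` attains the global minimum
value `(1/2) Vol_φ(M)`, then `δf = K·T` along `f` for some nowhere-vanishing smooth
`K ∈ F(M)`. -/
theorem minimum_implies_proportional {m n : ℕ} {M N : Type*}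
    -- (M,φ) a compact, connected, oriented Riemannian manifold
    [TopologicalSpace M] [ChartedSpace (EuclideanSpace ℝ (Fin m)) M]
    [IsManifold (𝓡 m) (⊤ : ℕ∞) M] [CompactSpace M] [ConnectedSpace M]
    [MeasurableSpace M] [BorelSpace M]
    -- (N,ψ) a Riemannian manifold
    [TopologicalSpace N] [ChartedSpace (EuclideanSpace ℝ (Fin n)) N]
    [IsManifold (𝓡 n) (⊤ : ℕ∞) N]
    (φinv : M → Matrix (Fin m) (Fin m) ℝ)
    (hφpos : ∀ a, (φinv a).PosDef)
    (hφsmooth : ∀ α β, ContMDiff (𝓡 m) 𝓘(ℝ) (⊤ : ℕ∞) fun a => φinv a α β)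
    (ψ : N → Matrix (Fin n) (Fin n) ℝ)
    (hψpos : ∀ x, (ψ x).PosDef)
    (hψsmooth : ∀ i j, ContMDiff (𝓡 n) 𝓘(ℝ) (⊤ : ℕ∞) fun x => ψ x i j)
    -- the Riemannian volume measure √φ da of the compact oriented (M,φ)
    (μ : Measure M) [IsFiniteMeasure μ] [μ.IsOpenPosMeasure]
    -- a tensor T on M × N with components T^i_α(a,x)
    (T : M → N → Fin n → Fin m → ℝ)
    (hT : ∀ i α, ContMDiff ((𝓡 m).prod (𝓡 n)) 𝓘(ℝ) (⊤ : ℕ∞) fun p : M × N => T p.1 p.2 i α)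
    -- a smooth map f : M → N, with the components Df = (f^i_α) of its differential δf
    (f : M → N) (hf : ContMDiff (𝓡 m) (𝓡 n) (⊤ : ℕ∞) f)
    (Df : M → Fin n → Fin m → ℝ)
    (hDf : ∀ i α, ContMDiff (𝓡 m) 𝓘(ℝ) (⊤ : ℕ∞) fun a => Df a i α)
    -- f is in the domain of L_T : ⟨δf, T(·,f(·))⟩ is nowhere zero
    (hne : ∀ a : M, glProd (φinv a) (ψ (f a)) (Df a) (T a (f a)) ≠ 0)
    -- f attains the global minimum value L_T(f) = (1/2) Vol_φ(M)
    (hmin : (1 / 2 : ℝ) * ∫ a, (glProd (φinv a) (ψ (f a)) (Df a) (Df a) *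
        glProd (φinv a) (ψ (f a)) (T a (f a)) (T a (f a))) /
        (glProd (φinv a) (ψ (f a)) (Df a) (T a (f a))) ^ 2 ∂μ =
      (1 / 2 : ℝ) * (μ Set.univ).toReal) :
    -- then δf = K·T along f for some nowhere-vanishing smooth K ∈ F(M)
    ∃ K : M → ℝ, ContMDiff (𝓡 m) 𝓘(ℝ) (⊤ : ℕ∞) K ∧ (∀ a : M, K a ≠ 0) ∧
      ∀ a : M, Df a = K a • T a (f a) :=
  minimum_implies_proportional_general φinv hφpos hφsmooth ψ hψpos hψsmooth μ T hT f hf Df hDf hne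
    hmin
end

section
/- Let (M,φ) be a compact, connected, oriented Riemannian manifold and A a smooth 1-form on M. If f ∈ F(M) is a smooth real-valued function solving the Pfaff system df = A, with A(grad_φ f) nowhere zero (equivalently A nowhere zero along the solution), then f realizes the global minimum of the functional L_A(g) = (1/2) ∫_M (‖A‖²_φ / [A(grad_φ g)]²) φ^{αβ} g_α g_β √φ da among smooth g with A(grad_φ g) nowhere zero, and L_A(f) = (1/2) Vol_φ(M). -/
/- STATEMENT 6.
Coordinate presentation: `φinv a` is the inverse metric `φ^{αβ}` of the compact, connected,
oriented Riemannian manifold `(M,φ)` at `a`, `μ` its Riemannian volume measure `√φ da`,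
`A a` the components `A_α(a)` of a smooth 1-form, and `Df a` the components
`f_α(a) = ∂f/∂a^α` of the differential of `f ∈ F(M)`.  Then
`A(grad_φ g) = φ^{αβ} A_α g_β` and `‖A‖²_φ = φ^{αβ} A_α A_β`. -/

open scoped Manifold
open MeasureTheory

/-- The scalar product `φ^{αβ} u_α v_β` of two covectors, `φinv` being `φ^{αβ}`. -/
noncomputable def coProd {m : ℕ} (φinv : Matrix (Fin m) (Fin m) ℝ)
    (u v : Fin m → ℝ) : ℝ :=
  ∑ α : Fin m, ∑ β : Fin m, φinv α β * u α * v β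

/-! By Cauchy–Schwarz for `φ^{αβ}`, the integrand of `L_A(g)` is at least `1` at every point,
and it is exactly `1` wherever `dg = A`; integrating, `L_A(g) ≥ Vol_φ(M)/2 = L_A(f)`. -/

theorem coProd_eq_toBilin' {m : ℕ} (φ : Matrix (Fin m) (Fin m) ℝ) (u v : Fin m → ℝ) :
    coProd φ u v = φ.toBilin' u v := by
  simp only [coProd, Matrix.toBilin'_apply', dotProduct, Matrix.mulVec, Finset.mul_sum]
  exact Finset.sum_congr rfl fun _ _ => Finset.sum_congr rfl fun _ _ => by ring

theorem coProd_sq_le_mul {m : ℕ} {φ : Matrix (Fin m) (Fin m) ℝ} (hφ : φ.PosSemidef)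
    (u v : Fin m → ℝ) : coProd φ u v ^ 2 ≤ coProd φ u u * coProd φ v v := by
  have hsymm : LinearMap.IsSymm φ.toBilin' := LinearMap.BilinForm.isSymm_iff.1 <|
    Matrix.isSymm_toBilin'_iff_isSymm.2 (Matrix.isHermitian_iff_isSymm.1 hφ.isHermitian)
  simp only [coProd_eq_toBilin']
  refine LinearMap.BilinForm.apply_sq_le_of_symm _ (fun w => ?_) hsymm u v
  simpa [Matrix.toBilin'_apply'] using hφ.dotProduct_mulVec_nonneg w

theorem Continuous.coProd {m : ℕ} {X : Type*} [TopologicalSpace X]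
    {φ : X → Matrix (Fin m) (Fin m) ℝ} {u v : X → Fin m → ℝ}
    (hφ : Continuous φ) (hu : Continuous u) (hv : Continuous v) :
    Continuous fun x => coProd (φ x) (u x) (v x) := by
  unfold _root_.coProd
  fun_prop

/-- The integrand `(‖A‖²_φ / [A(grad_φ g)]²) φ^{αβ} g_α g_β` of `L_A(g)`, with `u = A`, `v = dg`. -/
noncomputable def pfaffIntegrand {m : ℕ} (φ : Matrix (Fin m) (Fin m) ℝ) (u v : Fin m → ℝ) : ℝ :=
  coProd φ u u / coProd φ u v ^ 2 * coProd φ v v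

theorem pfaffIntegrand_self {m : ℕ} {φ : Matrix (Fin m) (Fin m) ℝ} {u : Fin m → ℝ}
    (hu : coProd φ u u ≠ 0) : pfaffIntegrand φ u u = 1 := by
  unfold pfaffIntegrand
  field_simp

theorem one_le_pfaffIntegrand {m : ℕ} {φ : Matrix (Fin m) (Fin m) ℝ} (hφ : φ.PosSemidef)
    {u v : Fin m → ℝ} (huv : coProd φ u v ≠ 0) : 1 ≤ pfaffIntegrand φ u v := by
  rw [pfaffIntegrand, div_mul_eq_mul_div, one_le_div (pow_two_pos_of_ne_zero huv)]
  exact coProd_sq_le_mul hφ u v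

theorem continuous_pfaffIntegrand {m : ℕ} {X : Type*} [TopologicalSpace X]
    {φ : X → Matrix (Fin m) (Fin m) ℝ} {u v : X → Fin m → ℝ}
    (hφ : Continuous φ) (hu : Continuous u) (hv : Continuous v)
    (huv : ∀ x, coProd (φ x) (u x) (v x) ≠ 0) :
    Continuous fun x => pfaffIntegrand (φ x) (u x) (v x) :=
  ((hφ.coProd hu hu).div ((hφ.coProd hu hv).pow 2) fun x => pow_ne_zero 2 (huv x)).mul
    (hφ.coProd hv hv)

theorem pfaff_solution_minimizes_general {m : ℕ} {M : Type*}
    -- (M,φ) a compact, connected, oriented Riemannian manifold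
    [TopologicalSpace M] [ChartedSpace (EuclideanSpace ℝ (Fin m)) M]
    [CompactSpace M]
    [MeasurableSpace M] [BorelSpace M]
    (φinv : M → Matrix (Fin m) (Fin m) ℝ)
    (hφpos : ∀ a, (φinv a).PosDef)
    (hφsmooth : ∀ α β, ContMDiff (𝓡 m) 𝓘(ℝ) (⊤ : ℕ∞) fun a => φinv a α β)
    -- the Riemannian volume measure √φ da of the compact oriented (M,φ)
    (μ : Measure M) [IsFiniteMeasure μ]
    -- A a smooth 1-form on M
    (A : M → Fin m → ℝ)
    (hA : ∀ α, ContMDiff (𝓡 m) 𝓘(ℝ) (⊤ : ℕ∞) fun a => A a α)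
    -- f ∈ F(M) a smooth real-valued function, with the components Df = (f_α) of df
    (Df : M → Fin m → ℝ)
    -- f solves the Pfaff system df = A
    (hE : ∀ a : M, Df a = A a)
    -- A(grad_φ f) nowhere zero (equivalently, A nowhere zero along the solution)
    (hne : ∀ a : M, coProd (φinv a) (A a) (Df a) ≠ 0) :
    (1 / 2 : ℝ) * ∫ a, (coProd (φinv a) (A a) (A a) /
          (coProd (φinv a) (A a) (Df a)) ^ 2) * coProd (φinv a) (Df a) (Df a) ∂μ =
        (1 / 2 : ℝ) * (μ Set.univ).toReal ∧
      ∀ (g : M → ℝ), ContMDiff (𝓡 m) 𝓘(ℝ) (⊤ : ℕ∞) g →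
        ∀ (Dg : M → Fin m → ℝ),
          (∀ α, ContMDiff (𝓡 m) 𝓘(ℝ) (⊤ : ℕ∞) fun a => Dg a α) →
          (∀ a : M, coProd (φinv a) (A a) (Dg a) ≠ 0) →
          (1 / 2 : ℝ) * ∫ a, (coProd (φinv a) (A a) (A a) /
              (coProd (φinv a) (A a) (Df a)) ^ 2) * coProd (φinv a) (Df a) (Df a) ∂μ ≤
            (1 / 2 : ℝ) * ∫ a, (coProd (φinv a) (A a) (A a) /
              (coProd (φinv a) (A a) (Dg a)) ^ 2) * coProd (φinv a) (Dg a) (Dg a) ∂μ := by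
  have hL_f : ∫ a, pfaffIntegrand (φinv a) (A a) (Df a) ∂μ = μ.real Set.univ := by
    have hone : ∀ a, pfaffIntegrand (φinv a) (A a) (Df a) = 1 := fun a => by
      rw [hE a]
      exact pfaffIntegrand_self (hE a ▸ hne a)
    simp [hone]
  refine ⟨congrArg _ hL_f, fun g _ Dg hDg hgne => ?_⟩
  have hcont : Continuous fun a => pfaffIntegrand (φinv a) (A a) (Dg a) :=
    continuous_pfaffIntegrand
      (continuous_pi fun α => continuous_pi fun β => (hφsmooth α β).continuous)
      (continuous_pi fun α => (hA α).continuous) (continuous_pi fun α => (hDg α).continuous)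
      hgne
  have hL_g : μ.real Set.univ ≤ ∫ a, pfaffIntegrand (φinv a) (A a) (Dg a) ∂μ := by
    simpa using integral_mono (integrable_const 1)
      (hcont.integrable_of_hasCompactSupport (.of_compactSpace _))
      fun a => one_le_pfaffIntegrand (hφpos a).posSemidef (hgne a)
  exact mul_le_mul_of_nonneg_left (hL_f ▸ hL_g) (by norm_num)

/-- A solution `f ∈ F(M)` of the Pfaff system `df = A`, with
`A(grad_φ f)` nowhere zero, realizes the global minimum of
`L_A(g) = (1/2)∫_M (‖A‖²_φ/[A(grad_φ g)]²) φ^{αβ} g_α g_β √φ da`, and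
`L_A(f) = (1/2) Vol_φ(M)`. -/
theorem pfaff_solution_minimizes {m : ℕ} {M : Type*}
    -- (M,φ) a compact, connected, oriented Riemannian manifold
    [TopologicalSpace M] [ChartedSpace (EuclideanSpace ℝ (Fin m)) M]
    [IsManifold (𝓡 m) (⊤ : ℕ∞) M] [CompactSpace M] [ConnectedSpace M]
    [MeasurableSpace M] [BorelSpace M]
    (φinv : M → Matrix (Fin m) (Fin m) ℝ)
    (hφpos : ∀ a, (φinv a).PosDef)
    (hφsmooth : ∀ α β, ContMDiff (𝓡 m) 𝓘(ℝ) (⊤ : ℕ∞) fun a => φinv a α β)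
    -- the Riemannian volume measure √φ da of the compact oriented (M,φ)
    (μ : Measure M) [IsFiniteMeasure μ] [μ.IsOpenPosMeasure]
    -- A a smooth 1-form on M
    (A : M → Fin m → ℝ)
    (hA : ∀ α, ContMDiff (𝓡 m) 𝓘(ℝ) (⊤ : ℕ∞) fun a => A a α)
    -- f ∈ F(M) a smooth real-valued function, with the components Df = (f_α) of df
    (f : M → ℝ) (hf : ContMDiff (𝓡 m) 𝓘(ℝ) (⊤ : ℕ∞) f)
    (Df : M → Fin m → ℝ)
    (hDf : ∀ α, ContMDiff (𝓡 m) 𝓘(ℝ) (⊤ : ℕ∞) fun a => Df a α)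
    -- f solves the Pfaff system df = A
    (hE : ∀ a : M, Df a = A a)
    -- A(grad_φ f) nowhere zero (equivalently, A nowhere zero along the solution)
    (hne : ∀ a : M, coProd (φinv a) (A a) (Df a) ≠ 0) :
    (1 / 2 : ℝ) * ∫ a, (coProd (φinv a) (A a) (A a) /
          (coProd (φinv a) (A a) (Df a)) ^ 2) * coProd (φinv a) (Df a) (Df a) ∂μ =
        (1 / 2 : ℝ) * (μ Set.univ).toReal ∧
      ∀ (g : M → ℝ), ContMDiff (𝓡 m) 𝓘(ℝ) (⊤ : ℕ∞) g →
        ∀ (Dg : M → Fin m → ℝ),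
          (∀ α, ContMDiff (𝓡 m) 𝓘(ℝ) (⊤ : ℕ∞) fun a => Dg a α) →
          (∀ a : M, coProd (φinv a) (A a) (Dg a) ≠ 0) →
          (1 / 2 : ℝ) * ∫ a, (coProd (φinv a) (A a) (A a) /
              (coProd (φinv a) (A a) (Df a)) ^ 2) * coProd (φinv a) (Df a) (Df a) ∂μ ≤
            (1 / 2 : ℝ) * ∫ a, (coProd (φinv a) (A a) (A a) /
              (coProd (φinv a) (A a) (Dg a)) ^ 2) * coProd (φinv a) (Dg a) (Dg a) ∂μ :=
  pfaff_solution_minimizes_general φinv hφpos hφsmooth μ A hA Df hE hne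
end

section
/- Let (M,φ) be a compact, connected, oriented Riemannian manifold, (N,ψ) a Riemannian manifold, ξ a smooth vector field on N and A a smooth 1-form on M, and set T^i_α(a,x) = ξ^i(x) A_α(a). If the smooth map f: M → N is a solution of the system ∂f^i/∂a^α = ξ^i(f(a)) A_α(a) with ⟨δf,T⟩ nowhere zero, then f is a global minimum of the functional L_T(g) = (1/2) ∫_M (‖ξ‖²_ψ ‖A‖²_φ / ⟨δg,T⟩²) φ^{αβ} ψ_{ij} g^i_α g^j_β √φ da over its domain, with L_T(f) = (1/2) Vol_φ(M). -/
/- STATEMENT 7.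
Coordinate presentation: `φinv a` is the inverse metric `φ^{αβ}` of the compact, connected,
oriented Riemannian manifold `(M,φ)` at `a`, `μ` its Riemannian volume measure `√φ da`,
`ψ x` the metric `ψ_{ij}` of the Riemannian manifold `(N,ψ)` at `x`, `ξ x` the components
`ξ^i(x)` of a smooth vector field on `N`, `A a` the components `A_α(a)` of a smooth 1-form
on `M`, and `Df a` the components `f^i_α = ∂f^i/∂a^α` of the differential `δf`.
The decomposable tensor is `T^i_α(a,x) = ξ^i(x) A_α(a)`; the pointwise scalar product is
`⟨T,S⟩ = φ^{αβ} ψ_{ij} T^i_α S^j_β`, `‖ξ‖²_ψ = ψ_{ij} ξ^i ξ^j`, `‖A‖²_φ = φ^{αβ} A_α A_β`. -/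

open scoped Manifold
open MeasureTheory

/-- `‖ξ‖²_ψ = ψ_{ij} ξ^i ξ^j`. -/
noncomputable def vecNormSq {n : ℕ} (ψ : Matrix (Fin n) (Fin n) ℝ)
    (ξ : Fin n → ℝ) : ℝ :=
  ∑ i : Fin n, ∑ j : Fin n, ψ i j * ξ i * ξ j

/-- `‖A‖²_φ = φ^{αβ} A_α A_β`. -/
noncomputable def coNormSq {m : ℕ} (φinv : Matrix (Fin m) (Fin m) ℝ)
    (A : Fin m → ℝ) : ℝ :=
  ∑ α : Fin m, ∑ β : Fin m, φinv α β * A α * A β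

/-! By Cauchy–Schwarz for `⟨·,·⟩`, which is the bilinear form of the positive semidefinite
Kronecker product `φ⁻¹ ⊗ ψ`, the integrand `‖T‖² ‖δg‖² / ⟨δg,T⟩²` of `L_T` is at least `1`
wherever `⟨δg,T⟩ ≠ 0`, so `L_T(g) ≥ Vol_φ(M) / 2`. For the solution `f` we have `δf = T` along
`f`, and the integrand is identically `1`. -/

open scoped Kronecker

theorem LinearMap.BilinForm.one_le_div_sq_mul_of_symm {R M : Type*} [Field R] [LinearOrder R]
    [IsStrictOrderedRing R] [AddCommGroup M] [Module R M] (B : LinearMap.BilinForm R M)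
    (hs : ∀ x, 0 ≤ B x x) (hB : LinearMap.IsSymm B) {x y : M} (hxy : B x y ≠ 0) :
    1 ≤ B y y / B x y ^ 2 * B x x := by
  rw [div_mul_eq_mul_div, one_le_div (by positivity), mul_comm]
  exact B.apply_sq_le_of_symm hs hB x y

section glProd

variable {m n : ℕ}

theorem glProd_eq_toBilin' (φinv : Matrix (Fin m) (Fin m) ℝ)
    (ψ : Matrix (Fin n) (Fin n) ℝ) (T S : Fin n → Fin m → ℝ) :
    glProd φinv ψ T S =
      (φinv ⊗ₖ ψ).toBilin' (fun p => T p.2 p.1) (fun p => S p.2 p.1) := by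
  simp only [Matrix.toBilin'_apply', dotProduct, Matrix.mulVec, Fintype.sum_prod_type,
    Matrix.kroneckerMap_apply, Finset.mul_sum, glProd]
  refine Finset.sum_congr rfl fun α _ => ?_
  rw [Finset.sum_comm]
  exact Finset.sum_congr rfl fun i _ => Finset.sum_congr rfl fun β _ =>
      Finset.sum_congr rfl fun j _ => by ring

theorem one_le_glProd_div_sq_mul {φinv : Matrix (Fin m) (Fin m) ℝ}
    {ψ : Matrix (Fin n) (Fin n) ℝ} (hφ : φinv.PosSemidef) (hψ : ψ.PosSemidef)
    {S T : Fin n → Fin m → ℝ} (hST : glProd φinv ψ S T ≠ 0) :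
    1 ≤ glProd φinv ψ T T / glProd φinv ψ S T ^ 2 * glProd φinv ψ S S := by
  have hK := hφ.kronecker hψ
  simp only [glProd_eq_toBilin'] at hST ⊢
  refine (φinv ⊗ₖ ψ).toBilin'.one_le_div_sq_mul_of_symm (fun v => ?_)
    (LinearMap.BilinForm.isSymm_iff.1 <| Matrix.isSymm_toBilin'_iff_isSymm.2 <|
      Matrix.isHermitian_iff_isSymm.1 hK.isHermitian) hST
  simpa [Matrix.toBilin'_apply'] using hK.dotProduct_mulVec_nonneg v

theorem glProd_self_of_decomposable {φinv : Matrix (Fin m) (Fin m) ℝ}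
    {ψ : Matrix (Fin n) (Fin n) ℝ} {ξ : Fin n → ℝ} {A : Fin m → ℝ} {T : Fin n → Fin m → ℝ}
    (hT : ∀ i α, T i α = ξ i * A α) :
    glProd φinv ψ T T = vecNormSq ψ ξ * coNormSq φinv A := by
  simp only [glProd, vecNormSq, coNormSq, hT, Finset.sum_mul, Finset.mul_sum]
  refine Finset.sum_congr rfl fun α _ => Finset.sum_congr rfl fun β _ =>
    Finset.sum_congr rfl fun i _ => Finset.sum_congr rfl fun j _ => by ring

theorem Continuous.glProd {X : Type*} [TopologicalSpace X] {φinv : X → Matrix (Fin m) (Fin m) ℝ}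
    {ψ : X → Matrix (Fin n) (Fin n) ℝ} {T S : X → Fin n → Fin m → ℝ}
    (hφ : Continuous φinv) (hψ : Continuous ψ) (hT : Continuous T) (hS : Continuous S) :
    Continuous fun x => glProd (φinv x) (ψ x) (T x) (S x) := by
  unfold _root_.glProd; fun_prop

end glProd

theorem measureReal_univ_le_integral_of_one_le {X : Type*} [TopologicalSpace X] [CompactSpace X]
    [MeasurableSpace X] [OpensMeasurableSpace X] {μ : Measure X} [IsFiniteMeasure μ] {F : X → ℝ}
    (hF : Continuous F) (h1 : ∀ x, 1 ≤ F x) : μ.real Set.univ ≤ ∫ x, F x ∂μ := by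
  simpa using integral_mono (integrable_const 1)
    (hF.integrable_of_hasCompactSupport (.of_compactSpace F)) h1

theorem pseudolinear_solution_minimizes_general {m n : ℕ} {M N : Type*}
    -- (M,φ) a compact, connected, oriented Riemannian manifold
    [TopologicalSpace M] [ChartedSpace (EuclideanSpace ℝ (Fin m)) M]
    [CompactSpace M]
    [MeasurableSpace M] [BorelSpace M]
    -- (N,ψ) a Riemannian manifold
    [TopologicalSpace N] [ChartedSpace (EuclideanSpace ℝ (Fin n)) N]
    (φinv : M → Matrix (Fin m) (Fin m) ℝ)
    (hφpos : ∀ a, (φinv a).PosDef)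
    (hφsmooth : ∀ α β, ContMDiff (𝓡 m) 𝓘(ℝ) (⊤ : ℕ∞) fun a => φinv a α β)
    (ψ : N → Matrix (Fin n) (Fin n) ℝ)
    (hψpos : ∀ x, (ψ x).PosDef)
    (hψsmooth : ∀ i j, ContMDiff (𝓡 n) 𝓘(ℝ) (⊤ : ℕ∞) fun x => ψ x i j)
    -- the Riemannian volume measure √φ da of the compact oriented (M,φ)
    (μ : Measure M) [IsFiniteMeasure μ]
    -- ξ a smooth vector field on N and A a smooth 1-form on M
    (ξ : N → Fin n → ℝ) (hξ : ∀ i, ContMDiff (𝓡 n) 𝓘(ℝ) (⊤ : ℕ∞) fun x => ξ x i)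
    (A : M → Fin m → ℝ) (hA : ∀ α, ContMDiff (𝓡 m) 𝓘(ℝ) (⊤ : ℕ∞) fun a => A a α)
    -- the decomposable tensor T^i_α(a,x) = ξ^i(x) A_α(a)
    (T : M → N → Fin n → Fin m → ℝ)
    (hTdef : ∀ a x i α, T a x i α = ξ x i * A a α)
    -- f : M → N smooth, with the components Df = (f^i_α) of its differential δf
    (f : M → N)
    (Df : M → Fin n → Fin m → ℝ)
    -- f solves the system ∂f^i/∂a^α = ξ^i(f(a)) A_α(a)
    (hE : ∀ a i α, Df a i α = ξ (f a) i * A a α)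
    -- ⟨δf, T⟩ nowhere zero
    (hne : ∀ a : M, glProd (φinv a) (ψ (f a)) (Df a) (T a (f a)) ≠ 0) :
    (1 / 2 : ℝ) * ∫ a, (vecNormSq (ψ (f a)) (ξ (f a)) * coNormSq (φinv a) (A a) /
          (glProd (φinv a) (ψ (f a)) (Df a) (T a (f a))) ^ 2) *
          glProd (φinv a) (ψ (f a)) (Df a) (Df a) ∂μ =
        (1 / 2 : ℝ) * (μ Set.univ).toReal ∧
      ∀ (g : M → N), ContMDiff (𝓡 m) (𝓡 n) (⊤ : ℕ∞) g →
        ∀ (Dg : M → Fin n → Fin m → ℝ),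
          (∀ i α, ContMDiff (𝓡 m) 𝓘(ℝ) (⊤ : ℕ∞) fun a => Dg a i α) →
          (∀ a : M, glProd (φinv a) (ψ (g a)) (Dg a) (T a (g a)) ≠ 0) →
          (1 / 2 : ℝ) * ∫ a, (vecNormSq (ψ (f a)) (ξ (f a)) * coNormSq (φinv a) (A a) /
              (glProd (φinv a) (ψ (f a)) (Df a) (T a (f a))) ^ 2) *
              glProd (φinv a) (ψ (f a)) (Df a) (Df a) ∂μ ≤
            (1 / 2 : ℝ) * ∫ a, (vecNormSq (ψ (g a)) (ξ (g a)) * coNormSq (φinv a) (A a) /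
              (glProd (φinv a) (ψ (g a)) (Dg a) (T a (g a))) ^ 2) *
              glProd (φinv a) (ψ (g a)) (Dg a) (Dg a) ∂μ := by
  have hDfT : ∀ a, Df a = T a (f a) := fun a =>
    funext₂ fun i α => (hE a i α).trans (hTdef a (f a) i α).symm
  have hnorm : ∀ a x, vecNormSq (ψ x) (ξ x) * coNormSq (φinv a) (A a) =
      glProd (φinv a) (ψ x) (T a x) (T a x) := fun a x =>
    (glProd_self_of_decomposable (hTdef a x)).symm
  simp only [hnorm, hDfT] at hne ⊢
  have hf_integrand : ∀ a, glProd (φinv a) (ψ (f a)) (T a (f a)) (T a (f a)) /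
      glProd (φinv a) (ψ (f a)) (T a (f a)) (T a (f a)) ^ 2 *
      glProd (φinv a) (ψ (f a)) (T a (f a)) (T a (f a)) = 1 := fun a => by
    field_simp [hne a]
  simp only [hf_integrand, integral_const, smul_eq_mul, mul_one, ← measureReal_def, true_and]
  intro g hg Dg hDg hgne
  gcongr
  have hφc : Continuous φinv :=
    continuous_pi fun α => continuous_pi fun β => (hφsmooth α β).continuous
  have hψc : Continuous fun a => ψ (g a) :=
    continuous_pi fun i => continuous_pi fun j => (hψsmooth i j).continuous.comp hg.continuous
  have hTc : Continuous fun a => T a (g a) := by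
    simp only [funext₂ (hTdef _ _)]
    exact continuous_pi fun i => continuous_pi fun α =>
      ((hξ i).continuous.comp hg.continuous).mul (hA α).continuous
  have hDgc : Continuous Dg :=
    continuous_pi fun i => continuous_pi fun α => (hDg i α).continuous
  refine measureReal_univ_le_integral_of_one_le ?_ fun a =>
    one_le_glProd_div_sq_mul (hφpos a).posSemidef (hψpos (g a)).posSemidef (hgne a)
  exact (((hφc.glProd hψc hTc hTc).div ((hφc.glProd hψc hDgc hTc).pow 2)
    fun a => pow_ne_zero 2 (hgne a)).mul (hφc.glProd hψc hDgc hDgc))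

/-- A solution `f` of `∂f^i/∂a^α = ξ^i(f(a)) A_α(a)` with `⟨δf,T⟩`
nowhere zero is a global minimum of
`L_T(g) = (1/2)∫_M (‖ξ‖²_ψ ‖A‖²_φ / ⟨δg,T⟩²) φ^{αβ} ψ_{ij} g^i_α g^j_β √φ da`,
with `L_T(f) = (1/2) Vol_φ(M)`. -/
theorem pseudolinear_solution_minimizes {m n : ℕ} {M N : Type*}
    -- (M,φ) a compact, connected, oriented Riemannian manifold
    [TopologicalSpace M] [ChartedSpace (EuclideanSpace ℝ (Fin m)) M]
    [IsManifold (𝓡 m) (⊤ : ℕ∞) M] [CompactSpace M] [ConnectedSpace M]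
    [MeasurableSpace M] [BorelSpace M]
    -- (N,ψ) a Riemannian manifold
    [TopologicalSpace N] [ChartedSpace (EuclideanSpace ℝ (Fin n)) N]
    [IsManifold (𝓡 n) (⊤ : ℕ∞) N]
    (φinv : M → Matrix (Fin m) (Fin m) ℝ)
    (hφpos : ∀ a, (φinv a).PosDef)
    (hφsmooth : ∀ α β, ContMDiff (𝓡 m) 𝓘(ℝ) (⊤ : ℕ∞) fun a => φinv a α β)
    (ψ : N → Matrix (Fin n) (Fin n) ℝ)
    (hψpos : ∀ x, (ψ x).PosDef)
    (hψsmooth : ∀ i j, ContMDiff (𝓡 n) 𝓘(ℝ) (⊤ : ℕ∞) fun x => ψ x i j)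
    -- the Riemannian volume measure √φ da of the compact oriented (M,φ)
    (μ : Measure M) [IsFiniteMeasure μ] [μ.IsOpenPosMeasure]
    -- ξ a smooth vector field on N and A a smooth 1-form on M
    (ξ : N → Fin n → ℝ) (hξ : ∀ i, ContMDiff (𝓡 n) 𝓘(ℝ) (⊤ : ℕ∞) fun x => ξ x i)
    (A : M → Fin m → ℝ) (hA : ∀ α, ContMDiff (𝓡 m) 𝓘(ℝ) (⊤ : ℕ∞) fun a => A a α)
    -- the decomposable tensor T^i_α(a,x) = ξ^i(x) A_α(a)
    (T : M → N → Fin n → Fin m → ℝ)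
    (hTdef : ∀ a x i α, T a x i α = ξ x i * A a α)
    -- f : M → N smooth, with the components Df = (f^i_α) of its differential δf
    (f : M → N) (hf : ContMDiff (𝓡 m) (𝓡 n) (⊤ : ℕ∞) f)
    (Df : M → Fin n → Fin m → ℝ)
    (hDf : ∀ i α, ContMDiff (𝓡 m) 𝓘(ℝ) (⊤ : ℕ∞) fun a => Df a i α)
    -- f solves the system ∂f^i/∂a^α = ξ^i(f(a)) A_α(a)
    (hE : ∀ a i α, Df a i α = ξ (f a) i * A a α)
    -- ⟨δf, T⟩ nowhere zero
    (hne : ∀ a : M, glProd (φinv a) (ψ (f a)) (Df a) (T a (f a)) ≠ 0) :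
    (1 / 2 : ℝ) * ∫ a, (vecNormSq (ψ (f a)) (ξ (f a)) * coNormSq (φinv a) (A a) /
          (glProd (φinv a) (ψ (f a)) (Df a) (T a (f a))) ^ 2) *
          glProd (φinv a) (ψ (f a)) (Df a) (Df a) ∂μ =
        (1 / 2 : ℝ) * (μ Set.univ).toReal ∧
      ∀ (g : M → N), ContMDiff (𝓡 m) (𝓡 n) (⊤ : ℕ∞) g →
        ∀ (Dg : M → Fin n → Fin m → ℝ),
          (∀ i α, ContMDiff (𝓡 m) 𝓘(ℝ) (⊤ : ℕ∞) fun a => Dg a i α) →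
          (∀ a : M, glProd (φinv a) (ψ (g a)) (Dg a) (T a (g a)) ≠ 0) →
          (1 / 2 : ℝ) * ∫ a, (vecNormSq (ψ (f a)) (ξ (f a)) * coNormSq (φinv a) (A a) /
              (glProd (φinv a) (ψ (f a)) (Df a) (T a (f a))) ^ 2) *
              glProd (φinv a) (ψ (f a)) (Df a) (Df a) ∂μ ≤
            (1 / 2 : ℝ) * ∫ a, (vecNormSq (ψ (g a)) (ξ (g a)) * coNormSq (φinv a) (A a) /
              (glProd (φinv a) (ψ (g a)) (Dg a) (T a (g a))) ^ 2) *
              glProd (φinv a) (ψ (g a)) (Dg a) (Dg a) ∂μ :=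
  pseudolinear_solution_minimizes_general φinv hφpos hφsmooth ψ hψpos hψsmooth μ ξ hξ A hA T hTdef f
    Df hE hne
end
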